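/- In the wreath product Z ≀ Z = (⊕_{h∈Z} Z) ⋊ Z, with γ the generator of the acting copy of Z and σ the generator of the copy of Z at position 0 in the direct sum, the element e_i = γ^i σ γ^{-i} has word length 2i+1 (for i ≥ 1) with respect to the generating set {γ^{±1}, σ^{±1}}. -/

import Mathlib

open Multiplicative

noncomputable section

def shiftAut (n : ℤ) : MulAut (Multiplicative (ℤ →₀ ℤ)) :=
  AddEquiv.toMultiplicative (Finsupp.domCongr (Equiv.addLeft n))

def shiftHom : Multiplicative ℤ →* MulAut (Multiplicative (ℤ →₀ ℤ)) where
  toFun n := shiftAut n.toAdd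
  map_one' := by
    ext f : 1
    show ofAdd (Finsupp.equivMapDomain (Equiv.addLeft ((1 : Multiplicative ℤ).toAdd)) f.toAdd) = f
    have : Equiv.addLeft ((1 : Multiplicative ℤ).toAdd) = Equiv.refl ℤ := by ext x; simp
    rw [this, Finsupp.equivMapDomain_refl]
    rfl
  map_mul' m n := by
    ext f : 1
    show ofAdd (Finsupp.equivMapDomain (Equiv.addLeft ((m * n).toAdd)) f.toAdd) = _
    have : (Equiv.addLeft ((m * n).toAdd) : ℤ ≃ ℤ) =
        (Equiv.addLeft n.toAdd).trans (Equiv.addLeft m.toAdd) := by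
      ext x; simp [add_assoc]
    rw [this, Finsupp.equivMapDomain_trans]
    rfl

/-- The wreath product `ℤ ≀ ℤ = (⊕_{h∈ℤ} ℤ) ⋊ ℤ`, where `ℤ` acts by shifting
coordinates. -/
def ZwrZ := SemidirectProduct (Multiplicative (ℤ →₀ ℤ)) (Multiplicative ℤ) shiftHom

instance : Group ZwrZ := SemidirectProduct.instGroup

/-- `γ`, the generator of the acting copy of `ℤ`. -/
def γ : ZwrZ := SemidirectProduct.inr (ofAdd 1)

/-- `σ`, the generator of the copy of `ℤ` at position `0` in the direct sum. -/
def σ : ZwrZ := SemidirectProduct.inl (ofAdd (Finsupp.single 0 1))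

/-- `e i = γ^i σ γ^{-i}`. -/
def e (i : ℕ) : ZwrZ := γ ^ (i : ℤ) * σ * γ ^ (-(i : ℤ))


/-- The word length of `g` with respect to the (symmetric) alphabet `S`:
the least length of a list of elements of `S` with product `g`. -/
def wordLength {G : Type*} [Group G] (S : Set G) (g : G) : ℕ :=
  sInf {n | ∃ l : List G, (∀ x ∈ l, x ∈ S) ∧ l.length = n ∧ l.prod = g}

/-!
Read `g : ZwrZ` as a lamplighter configuration: `cursor g` is its `γ`-exponent and `lamps g` its
finitely supported lamp function. Along a word in `γ^{±1}, σ^{±1}` each letter `γ^{±1}` moves the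
cursor one step, while `σ^{±1}` changes only the lamp under the cursor. In `e i` the lamp at `i` is
lit and the cursor is back at `0`, so every word for `e i` walks from `0` to `i` and back (`2 i`
letters) and spends one further letter on the lamp; `γ^i σ γ^{-i}` is such a word.
-/

theorem wordLength_le_length {G : Type*} [Group G] {S : Set G} {l : List G}
    (hl : ∀ x ∈ l, x ∈ S) : wordLength S l.prod ≤ l.length :=
  Nat.sInf_le ⟨l, hl, rfl, rfl⟩

theorem le_wordLength {G : Type*} [Group G] {S : Set G} {g : G} {n : ℕ}
    (hg : ∃ l : List G, (∀ x ∈ l, x ∈ S) ∧ l.prod = g)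
    (h : ∀ l : List G, (∀ x ∈ l, x ∈ S) → l.prod = g → n ≤ l.length) :
    n ≤ wordLength S g := by
  obtain ⟨l, hl, rfl⟩ := hg
  refine le_csInf ⟨l.length, l, hl, rfl, rfl⟩ ?_
  rintro _ ⟨l', hl', rfl, hprod⟩
  exact h l' hl' hprod

namespace ZwrZ

def gens : Set ZwrZ := {γ, γ⁻¹, σ, σ⁻¹}

def cursor (g : ZwrZ) : ℤ := g.right.toAdd

def lamps (g : ZwrZ) : ℤ →₀ ℤ := g.left.toAdd

theorem cursor_mul (g h : ZwrZ) : cursor (g * h) = cursor g + cursor h := rfl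

theorem lamps_mul_apply (g h : ZwrZ) (t : ℤ) :
    lamps (g * h) t = lamps g t + lamps h (t - cursor g) := by
  rw [sub_eq_neg_add]
  rfl

theorem γ_zpow (n : ℤ) : γ ^ n = SemidirectProduct.inr (ofAdd n) := by
  show (SemidirectProduct.inr (ofAdd 1) : Multiplicative (ℤ →₀ ℤ) ⋊[shiftHom] _) ^ n = _
  rw [← map_zpow, ← ofAdd_zsmul, smul_eq_mul, mul_one]

theorem σ_zpow (n : ℤ) : σ ^ n = SemidirectProduct.inl (ofAdd (Finsupp.single 0 n)) := by
  show (SemidirectProduct.inl (ofAdd (Finsupp.single 0 1)) : _ ⋊[shiftHom] Multiplicative ℤ) ^ n = _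
  rw [← map_zpow, ← ofAdd_zsmul, Finsupp.smul_single, smul_eq_mul, mul_one]

theorem cursor_γ_zpow (n : ℤ) : cursor (γ ^ n) = n := by rw [γ_zpow]; rfl

theorem lamps_γ_zpow (n : ℤ) : lamps (γ ^ n) = 0 := by rw [γ_zpow]; rfl

theorem cursor_σ_zpow (n : ℤ) : cursor (σ ^ n) = 0 := by rw [σ_zpow]; rfl

theorem lamps_σ_zpow (n : ℤ) : lamps (σ ^ n) = Finsupp.single 0 n := by rw [σ_zpow]; rfl

theorem cursor_lamps_of_mem_gens {s : ZwrZ} (hs : s ∈ gens) :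
    (cursor s).natAbs = 1 ∧ lamps s = 0 ∨ cursor s = 0 ∧ ∀ t ≠ 0, lamps s t = 0 := by
  obtain ⟨n, hn, rfl | rfl⟩ : ∃ n : ℤ, n.natAbs = 1 ∧ (s = γ ^ n ∨ s = σ ^ n) := by
    rcases hs with rfl | rfl | rfl | rfl
    exacts [⟨1, rfl, .inl (zpow_one γ).symm⟩, ⟨-1, rfl, .inl (zpow_neg_one γ).symm⟩,
      ⟨1, rfl, .inr (zpow_one σ).symm⟩, ⟨-1, rfl, .inr (zpow_neg_one σ).symm⟩]
  · exact .inl ⟨by rw [cursor_γ_zpow, hn], lamps_γ_zpow n⟩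
  · exact .inr ⟨cursor_σ_zpow n, fun t ht => by rw [lamps_σ_zpow, Finsupp.single_eq_of_ne ht]⟩

theorem natAbs_cursor_le_length {l : List ZwrZ} (hl : ∀ x ∈ l, x ∈ gens) :
    (cursor l.prod).natAbs ≤ l.length := by
  induction l with
  | nil => rfl
  | cons s l ih =>
    rw [List.prod_cons, cursor_mul, List.length_cons]
    have := ih fun x hx => hl x (List.mem_cons_of_mem s hx)
    rcases cursor_lamps_of_mem_gens (hl s List.mem_cons_self) with ⟨hs, -⟩ | ⟨hs, -⟩ <;> omega

theorem natAbs_add_natAbs_sub_cursor_lt_length {l : List ZwrZ} (hl : ∀ x ∈ l, x ∈ gens)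
    {t : ℤ} (ht : lamps l.prod t ≠ 0) :
    t.natAbs + (t - cursor l.prod).natAbs < l.length := by
  induction l generalizing t with
  | nil => exact absurd rfl ht
  | cons s l ih =>
    have hl' : ∀ x ∈ l, x ∈ gens := fun x hx => hl x (List.mem_cons_of_mem s hx)
    rw [List.prod_cons, lamps_mul_apply] at ht
    rw [List.prod_cons, cursor_mul, List.length_cons]
    rcases cursor_lamps_of_mem_gens (hl s List.mem_cons_self) with ⟨hs, hs0⟩ | ⟨hs, hst⟩
    · rw [hs0, Finsupp.coe_zero, Pi.zero_apply, zero_add] at ht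
      have := ih hl' ht
      omega
    · rw [hs, sub_zero] at ht
      by_cases ht0 : t = 0
      · have := natAbs_cursor_le_length hl'
        subst ht0
        omega
      · rw [hst t ht0, zero_add] at ht
        have := ih hl' ht
        omega

theorem prod_word_e (i : ℕ) : (List.replicate i γ ++ σ :: List.replicate i γ⁻¹).prod = e i := by
  rw [List.prod_append, List.prod_cons, List.prod_replicate, List.prod_replicate, e,
    zpow_neg, zpow_natCast, inv_pow, mul_assoc]

theorem cursor_e (i : ℕ) : cursor (e i) = 0 := by
  rw [e, cursor_mul, cursor_mul, cursor_γ_zpow, cursor_γ_zpow, ← zpow_one σ, cursor_σ_zpow]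
  ring

theorem lamps_e_apply_self (i : ℕ) : lamps (e i) i = 1 := by
  rw [e, lamps_mul_apply, lamps_mul_apply, lamps_γ_zpow, lamps_γ_zpow, cursor_γ_zpow,
    ← zpow_one σ, lamps_σ_zpow, sub_self, Finsupp.single_eq_same]
  simp

end ZwrZ

open ZwrZ

theorem wordLength_e_general (i : ℕ) :
    wordLength ({γ, γ⁻¹, σ, σ⁻¹} : Set ZwrZ) (e i) = 2 * i + 1 := by
  have hword : ∀ x ∈ List.replicate i γ ++ σ :: List.replicate i γ⁻¹, x ∈ gens := by
    simp only [List.mem_append, List.mem_cons, List.mem_replicate]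
    rintro x (⟨-, rfl⟩ | rfl | ⟨-, rfl⟩) <;> simp [gens]
  refine le_antisymm ?_ (le_wordLength ⟨_, hword, prod_word_e i⟩ fun l hl hprod => ?_)
  · have hlen : (List.replicate i γ ++ σ :: List.replicate i γ⁻¹).length = 2 * i + 1 := by
      simp only [List.length_append, List.length_cons, List.length_replicate]; omega
    rw [← prod_word_e, ← hlen]
    exact wordLength_le_length hword
  · have hwalk := natAbs_add_natAbs_sub_cursor_lt_length hl (t := i)
      (by rw [hprod, lamps_e_apply_self]; exact one_ne_zero)
    rw [hprod, cursor_e] at hwalk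
    omega

/-- In `ℤ ≀ ℤ`, the element `e i = γ^i σ γ^{-i}` has word length `2 i + 1` with
respect to the generating set `{γ, γ⁻¹, σ, σ⁻¹}`. -/
theorem wordLength_e (i : ℕ) (hi : 1 ≤ i) :
    wordLength ({γ, γ⁻¹, σ, σ⁻¹} : Set ZwrZ) (e i) = 2 * i + 1 :=
  wordLength_e_general i

end
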